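/- arXiv:1011.1817 — 5 statements merged into one kernel-verified Lean document; each statement's English description precedes it below -/
import Mathlib

section
/- Let (G, X) be a contracting self-similar action with nucleus N and asymptotic equivalence on X^{-ω} characterized by left-infinite paths in the Moore diagram of N. Then every asymptotic equivalence class has at most |N| elements; in particular, for every point a in the limit space J_G, the fiber p⁻¹(a) of the quotient map is finite. -/
/-- for a contracting self-similar action with finite nucleus `N`
(with action `act` and restriction `res` maps), the asymptotic equivalence `E` on
left-infinite words (modeled as `ℕ → X`, with `x n` the letter `x_{n+1}`),
characterized by left-infinite paths in the Moore diagram of the nucleus, has all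
equivalence classes of size at most `|N|`; in particular every fiber of the quotient
map `p : X^{-ω} → J_G` is finite. -/
theorem asymptotic_classes_finite {X N : Type*} [Fintype X] [Fintype N]
    (act : N → X → X) (res : N → X → N)
    (E : (ℕ → X) → (ℕ → X) → Prop)
    (hE : ∀ x y, E x y ↔ ∃ g : ℕ → N,
      ∀ n, act (g (n + 1)) (x n) = y n ∧ res (g (n + 1)) (x n) = g n)
    (s : Setoid (ℕ → X)) (hs : ∀ x y, s.r x y ↔ E x y) :
    (∀ x : ℕ → X, {y | E x y}.Finite ∧ {y | E x y}.ncard ≤ Fintype.card N) ∧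
    ∀ a : Quotient s, (Set.preimage (Quotient.mk s) {a}).Finite := by
  classical
  set c := Fintype.card N with hc
  -- Key pigeonhole claim: no injective (c+1)-tuple inside a class.
  have key : ∀ (x : ℕ → X) (f : Fin (c + 1) → (ℕ → X)),
      (∀ i, E x (f i)) → ¬ Function.Injective f := by
    intro x f hf hinj
    choose g hg using fun i => (hE x (f i)).mp (hf i)
    -- For each n, two indices share the same state at time n.
    have hpair : ∀ n : ℕ, ∃ p : Fin (c + 1) × Fin (c + 1),
        p.1 ≠ p.2 ∧ g p.1 n = g p.2 n := by
      intro n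
      obtain ⟨a, b, hab, heq⟩ :=
        Fintype.exists_ne_map_eq_of_card_lt (fun i => g i n) (by simp [hc])
      exact ⟨(a, b), hab, heq⟩
    choose h hh1 hh2 using hpair
    obtain ⟨p, hp⟩ := Finite.exists_infinite_fiber h
    have hpinf : (h ⁻¹' {p} : Set ℕ).Infinite := by
      rw [← Set.infinite_coe_iff] at *
      exact hp
    have hne : p.1 ≠ p.2 := by
      obtain ⟨n, hn⟩ := hpinf.nonempty
      have : h n = p := hn
      rw [← this]; exact hh1 n
    -- Backward determinism: agreement at time m propagates to all k ≤ m.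
    have back : ∀ m k, k ≤ m → g p.1 m = g p.2 m → g p.1 k = g p.2 k := by
      intro m
      induction m with
      | zero =>
        intro k hk heq
        have : k = 0 := Nat.le_zero.mp hk
        rw [this]; exact heq
      | succ m ih =>
        intro k hk heq
        have hm : g p.1 m = g p.2 m := by
          rw [← (hg p.1 m).2, ← (hg p.2 m).2, heq]
        rcases Nat.lt_or_ge k (m + 1) with hlt | hge
        · exact ih k (Nat.lt_succ_iff.mp hlt) hm
        · have : k = m + 1 := le_antisymm hk hge
          rw [this]; exact heq
    have hff : f p.1 = f p.2 := by
      funext n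
      obtain ⟨m, hm, hmnot⟩ := hpinf.exists_notMem_finset (Finset.range (n + 2))
      have hmn : n + 1 ≤ m := by
        simp only [Finset.mem_range, not_lt] at hmnot; omega
      have hm' : h m = p := hm
      have hgm : g p.1 m = g p.2 m := by rw [← hm']; exact hh2 m
      have hgn : g p.1 (n + 1) = g p.2 (n + 1) := back m (n + 1) hmn hgm
      rw [← (hg p.1 n).1, ← (hg p.2 n).1, hgn]
    exact hne (hinj hff)
  have main : ∀ x : ℕ → X, {y | E x y}.Finite ∧ {y | E x y}.ncard ≤ c := by
    intro x
    have hfin : {y | E x y}.Finite := by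
      by_contra hnf
      have hinf : {y | E x y}.Infinite := hnf
      let e := hinf.natEmbedding
      refine key x (fun i => (e i.val : {y | E x y})) (fun i => (e i.val).2) ?_
      intro i j hij
      exact Fin.val_injective (e.injective (Subtype.val_injective hij))
    refine ⟨hfin, ?_⟩
    by_contra h'
    push_neg at h'
    have hcard : c + 1 ≤ hfin.toFinset.card := by
      rw [Set.ncard_eq_toFinset_card _ hfin] at h'
      omega
    obtain ⟨t, hts, htc⟩ := Finset.exists_subset_card_eq hcard
    let e := t.equivFinOfCardEq htc
    refine key x (fun i => (e.symm i : (ℕ → X))) ?_ ?_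
    · intro i
      have : (e.symm i : ℕ → X) ∈ hfin.toFinset := hts (e.symm i).2
      rwa [Set.Finite.mem_toFinset] at this
    · intro i j hij
      exact e.symm.injective (Subtype.val_injective hij)
  refine ⟨main, ?_⟩
  intro a
  obtain ⟨x, rfl⟩ := Quotient.exists_rep a
  have hset : (Quotient.mk s) ⁻¹' {Quotient.mk s x} = {y | E x y} := by
    ext y
    simp only [Set.mem_preimage, Set.mem_singleton_iff, Set.mem_setOf_eq]
    constructor
    · intro hq
      have hyx : s.r y x := Quotient.exact hq
      exact (hs x y).mp (s.iseqv.symm hyx)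
    · intro hxy
      exact Quotient.sound (s.iseqv.symm ((hs x y).mpr hxy))
  rw [hset]
  exact (main x).1
end

section
/- A contracting action (G, X) satisfies: the quotient map p : X^{-ω} → J_G satisfies Condition 3.2 (p(ξ) = p(η) implies p(ξw) = p(ηw) for all w ∈ X*) if and only if (G, X) satisfies Condition 3.4: for every left-infinite path e in the Moore diagram of the nucleus ending at a state g₀ and every w ∈ X*, there is a left-infinite path f in the nucleus with the same edge labels as e, ending at a state g with g(w) = w. -/
/-- Appending the letter `i` at the right end of a left-infinite word. -/
def appendLetter {X : Type*} (i : X) (w : ℕ → X) : ℕ → X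
  | 0 => i
  | n + 1 => w n

/-- Appending a finite word (first-read letter at the head of the list). -/
def appendWord {X : Type*} : List X → (ℕ → X) → (ℕ → X)
  | [], ξ => ξ
  | a :: l, ξ => appendLetter a (appendWord l ξ)

/-- A left-infinite path in the Moore diagram of the nucleus, through states `(gₙ)`
with the `(n+1)`-st edge labeled `(x n, y n)`: `gₙ₊₁(xₙ₊₁) = yₙ₊₁` and
`gₙ₊₁|_{xₙ₊₁} = gₙ`. -/
def IsPath {N X : Type*} (act : N → X → X) (res : N → X → N)
    (g : ℕ → N) (x y : ℕ → X) : Prop :=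
  ∀ n, act (g (n + 1)) (x n) = y n ∧ res (g (n + 1)) (x n) = g n

/-- The action of a state on a finite word (first-read letter at the head). -/
def actWord {N X : Type*} (act : N → X → X) (res : N → X → N) : N → List X → List X
  | _, [] => []
  | q, a :: l => act q a :: actWord act res (res q a) l

/-! A path read along `ξw` is a path read along `ξ` followed by a run of states, starting at the
last state of that path, each of which fixes the next letter of `w` and restricts to the following
state; such a run exists exactly when that last state fixes `w`. The run meets the letters of `w`
in the order opposite to the one in which `appendWord` lists them, hence the `w.reverse` below. -/

section

variable {X N : Type*} (act : N → X → X) (res : N → X → N)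

lemma appendWord_append (u v : List X) (ξ : ℕ → X) :
    appendWord (u ++ v) ξ = appendWord u (appendWord v ξ) := by
  induction u with
  | nil => rfl
  | cons a u ih => simp only [List.cons_append, appendWord, ih]

lemma isPath_appendLetter_iff {g : ℕ → N} {a b : X} {x y : ℕ → X} :
    IsPath act res g (appendLetter a x) (appendLetter b y) ↔
      act (g 1) a = b ∧ res (g 1) a = g 0 ∧ IsPath act res (fun n => g (n + 1)) x y := by
  constructor
  · intro hg
    exact ⟨(hg 0).1, (hg 0).2, fun n => hg (n + 1)⟩
  · rintro ⟨hact, hres, hg⟩ (_ | n)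
    exacts [⟨hact, hres⟩, hg n]

lemma exists_isPath_appendWord_reverse_iff (w : List X) (x y : ℕ → X) :
    (∃ g, IsPath act res g (appendWord w.reverse x) (appendWord w.reverse y)) ↔
      ∃ h, IsPath act res h x y ∧ actWord act res (h 0) w = w := by
  induction w generalizing x y with
  | nil => simp [appendWord, actWord]
  | cons a w ih =>
    simp only [List.reverse_cons, appendWord_append, appendWord, ih, isPath_appendLetter_iff,
      actWord, List.cons.injEq]
    constructor
    · rintro ⟨g, ⟨hact, hres, hg⟩, hfix⟩
      exact ⟨fun n => g (n + 1), hg, hact, hres ▸ hfix⟩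
    · rintro ⟨h, hh, hact, hfix⟩
      exact ⟨fun | 0 => res (h 0) a | n + 1 => h n, ⟨hact, rfl, hh⟩, hfix⟩

end

theorem condition32_iff_condition34_general {X N : Type*}
    (act : N → X → X) (res : N → X → N)
    (E : (ℕ → X) → (ℕ → X) → Prop)
    (hE : ∀ x y, E x y ↔ ∃ g : ℕ → N, IsPath act res g x y) :
    (∀ x y : ℕ → X, E x y → ∀ w : List X, E (appendWord w x) (appendWord w y)) ↔
    (∀ (g : ℕ → N) (x y : ℕ → X), IsPath act res g x y → ∀ w : List X,
      ∃ h : ℕ → N, IsPath act res h x y ∧ actWord act res (h 0) w = w) := by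
  constructor
  · intro H g x y hg w
    have hxy : E x y := (hE x y).2 ⟨g, hg⟩
    exact (exists_isPath_appendWord_reverse_iff act res w x y).1
      ((hE _ _).1 (H x y hxy w.reverse))
  · intro H x y hxy w
    obtain ⟨g, hg⟩ := (hE x y).1 hxy
    obtain ⟨h, hh, hfix⟩ := H g x y hg w.reverse
    simpa using (hE _ _).2 ((exists_isPath_appendWord_reverse_iff act res w.reverse x y).2
      ⟨h, hh, hfix⟩)

/-- for a contracting action with nucleus automaton `(N, act, res)` and
asymptotic equivalence `E`, the quotient map satisfies Condition 3.2
(`p ξ = p η → p (ξ w) = p (η w)` for all finite `w`) if and only if Condition 3.4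
holds: for every left-infinite path in the nucleus and every finite word `w`, there
is an identically-labeled left-infinite path ending at a state `g` with `g w = w`. -/
theorem condition32_iff_condition34 {X N : Type*} [Fintype X] [Fintype N]
    (act : N → X → X) (res : N → X → N)
    (E : (ℕ → X) → (ℕ → X) → Prop)
    (hE : ∀ x y, E x y ↔ ∃ g : ℕ → N, IsPath act res g x y) :
    (∀ x y : ℕ → X, E x y → ∀ w : List X, E (appendWord w x) (appendWord w y)) ↔
    (∀ (g : ℕ → N) (x y : ℕ → X), IsPath act res g x y → ∀ w : List X,
      ∃ h : ℕ → N, IsPath act res h x y ∧ actWord act res (h 0) w = w) :=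
  condition32_iff_condition34_general act res E hE
end

section
/- Let (G, X) be a contracting action that is post-critically finite (only finitely many left-infinite paths in the Moore diagram of its nucleus end at a non-trivial state). Suppose …x₂x₁ ∈ X^{-ω} lies in the critical set of the induced self-similar structure and is asymptotically equivalent to some …y₂y₁ with x₁ ≠ y₁ via a path through states (gₙ) with gₙ non-trivial for all n ≥ 1. Then the forward shift orbit {σᵐ(…x₂x₁) : m ≥ 0} is finite; equivalently, …x₂x₁ is eventually periodic. -/
/-- let the contracting action be p.c.f., i.e. there are only finitely
many left-infinite paths in the Moore diagram of the nucleus ending at a non-trivial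
state (a path being determined by its state sequence and input word).  If
`…x₂x₁` is asymptotically equivalent to `…y₂y₁` with `x₁ ≠ y₁` via a path whose
states `gₙ` are non-trivial for all `n ≥ 1`, then the forward shift orbit of
`…x₂x₁` is finite; equivalently `…x₂x₁` is eventually periodic. -/
theorem shift_orbit_finite_of_pcf {X N : Type*} [Fintype X] [Fintype N]
    (act : N → X → X) (res : N → X → N) (one : N)
    (hone : ∀ x : X, act one x = x ∧ res one x = one)
    (hpcf : {q : (ℕ → N) × (ℕ → X) |
      (∀ n, res (q.1 (n + 1)) (q.2 n) = q.1 n) ∧ q.1 0 ≠ one}.Finite)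
    (x y : ℕ → X) (hxy : x 0 ≠ y 0)
    (g : ℕ → N) (hpath : IsPath act res g x y)
    (hnt : ∀ n, 1 ≤ n → g n ≠ one) :
    (Set.range fun m : ℕ => fun k => x (k + m)).Finite ∧
    ∃ p : ℕ, 0 < p ∧ ∃ M : ℕ, ∀ n, M ≤ n → x (n + p) = x n := by
  set S := {q : (ℕ → N) × (ℕ → X) |
      (∀ n, res (q.1 (n + 1)) (q.2 n) = q.1 n) ∧ q.1 0 ≠ one} with hS
  have hF : ∀ m : ℕ,
      ((fun n => g (n + m + 1), fun k => x (k + m + 1)) : (ℕ → N) × (ℕ → X)) ∈ S := by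
    intro m
    constructor
    · intro n
      have h := (hpath (n + m + 1)).2
      have harith : n + 1 + m + 1 = n + m + 1 + 1 := by omega
      simpa [harith] using h
    · have : (0 : ℕ) + m + 1 = m + 1 := by omega
      simpa [this] using hnt (m + 1) (by omega)
  constructor
  · apply Set.Finite.subset ((hpcf.image Prod.snd).insert (fun k => x k))
    rintro _ ⟨m, rfl⟩
    cases m with
    | zero => left; simp
    | succ m => right; exact ⟨_, hF m, rfl⟩
  · obtain ⟨a, -, b, -, hab, heq⟩ :=
      Set.infinite_univ.exists_ne_map_eq_of_mapsTo
        (f := fun m : ℕ =>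
          ((fun n => g (n + m + 1), fun k => x (k + m + 1)) : (ℕ → N) × (ℕ → X)))
        (fun m _ => hF m) hpcf
    have key : ∀ a b : ℕ, a < b →
        (fun k => x (k + a + 1)) = (fun k => x (k + b + 1)) →
        ∃ p : ℕ, 0 < p ∧ ∃ M : ℕ, ∀ n, M ≤ n → x (n + p) = x n := by
      intro a b hlt he
      refine ⟨b - a, by omega, a + 1, fun n hn => ?_⟩
      have h := congrFun he (n - a - 1)
      have h1 : n - a - 1 + a + 1 = n := by omega
      have h2 : n - a - 1 + b + 1 = n + (b - a) := by omega
      rw [h1, h2] at h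
      exact h.symm
    rcases hab.lt_or_gt with h | h
    · exact key a b h (congrArg Prod.snd heq)
    · exact key b a h (congrArg Prod.snd heq.symm)
end

section
/- Let L be a p.c.f. self-similar structure with surjection π satisfying shift-descent, and let α ≠ β be points of π(C) with π⁻¹(α) = \bar{z}Sₙ…S₂S₁ and π⁻¹(β) = \bar{z}Tₘ…T₂T₁ (same recurring tail \bar{z}), where each S_j, T_j ⊆ X and the notation denotes the set of words \bar{z}ξₙ…ξ₁ with ξ_j ∈ S_j. If S_{n-k} = T_{m-k} for all 0 ≤ k < N, then either S_{n-N} = T_{m-N} or S_{n-N} ∩ T_{m-N} = ∅. -/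
/-- The left-infinite periodic word `\bar z = …zzz`. -/
def periodicWord {X : Type*} (z : List X) (hz : 0 < z.length) : ℕ → X :=
  fun n => z.get ⟨n % z.length, Nat.mod_lt _ hz⟩

/-- The "product set" `\bar z Sₙ…S₂S₁` of left-infinite words: position `j+1`
(index `j`) carries a letter of `S j`, and beyond position `n` the word is the
periodic word `\bar z`. -/
def classSet {X : Type*} (z : List X) (hz : 0 < z.length) (n : ℕ)
    (S : Fin n → Set X) : Set (ℕ → X) :=
  {ξ | (∀ k : ℕ, ξ (n + k) = periodicWord z hz k) ∧ ∀ j : Fin n, ξ j.val ∈ S j}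

/-- Appends the letters `v (r-1) … v 0` at the right end of the left-infinite word `u`. -/
def appendLetters {X : Type*} (v : ℕ → X) (r : ℕ) (u : ℕ → X) : ℕ → X :=
  fun j => if j < r then v j else u (j - r)

section Words

variable {X K : Type*}

lemma appendLetters_zero (v u : ℕ → X) : appendLetters v 0 u = u := by
  funext j
  simp [appendLetters]

lemma appendLetters_succ (v : ℕ → X) (r : ℕ) (u : ℕ → X) :
    appendLetters v (r + 1) u = appendLetter (v 0) (appendLetters (fun j => v (j + 1)) r u) := by
  funext j
  cases j with
  | zero => simp [appendLetters, appendLetter]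
  | succ j =>
    simp only [appendLetters, appendLetter]
    split_ifs <;> first | rfl | omega | (congr 1; omega)

lemma appendLetters_apply_self (v : ℕ → X) (r : ℕ) (u : ℕ → X) :
    appendLetters v r u r = u 0 := by
  simp [appendLetters]

lemma map_shift_eq_of_map_eq {π : (ℕ → X) → K}
    (hshift : ∀ ξ η : ℕ → X, π ξ = π η →
      π (fun k => ξ (k + 1)) = π (fun k => η (k + 1)))
    (r : ℕ) {ξ η : ℕ → X} (h : π ξ = π η) :
    π (fun k => ξ (k + r)) = π (fun k => η (k + r)) := by
  induction r generalizing ξ η with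
  | zero => simpa using h
  | succ r ih => exact ih (hshift _ _ h)

lemma map_appendLetters_eq_of_map_eq {π : (ℕ → X) → K} {F : X → K → K}
    (hrel : ∀ (i : X) (ξ : ℕ → X), F i (π ξ) = π (appendLetter i ξ))
    (v : ℕ → X) (r : ℕ) {u₁ u₂ : ℕ → X} (h : π u₁ = π u₂) :
    π (appendLetters v r u₁) = π (appendLetters v r u₂) := by
  induction r generalizing v with
  | zero => simpa only [appendLetters_zero]
  | succ r ih => rw [appendLetters_succ, appendLetters_succ, ← hrel, ← hrel, ih]

variable {z : List X} {hz : 0 < z.length} {n : ℕ} {S : Fin n → Set X}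

lemma update_mem_classSet {ξ : ℕ → X} (hξ : ξ ∈ classSet z hz n S) (p : Fin n) {c : X}
    (hc : c ∈ S p) : Function.update ξ p c ∈ classSet z hz n S := by
  refine ⟨fun k => ?_, fun j => ?_⟩
  · rw [Function.update_of_ne (by omega)]
    exact hξ.1 k
  · rcases eq_or_ne j p with rfl | hj
    · simpa using hc
    · rw [Function.update_of_ne (Fin.val_ne_of_ne hj)]
      exact hξ.2 j

lemma appendLetters_mem_classSet {η u : ℕ → X} (hη : η ∈ classSet z hz n S) {q : ℕ}
    (hq : q ≤ n) (htail : ∀ k, u (n - q + k) = periodicWord z hz k)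
    (hletters : ∀ i (hi : q + i < n), u i ∈ S ⟨q + i, hi⟩) :
    appendLetters η q u ∈ classSet z hz n S := by
  refine ⟨fun k => ?_, fun j => ?_⟩
  · rw [appendLetters, if_neg (by omega), show n + k - q = n - q + k by omega, htail]
  · simp only [appendLetters]
    split_ifs with hj
    · exact hη.2 j
    · convert hletters (j - q) (by omega) using 2
      ext
      simp only
      omega

end Words

lemma letterSet_subset_of_mem_inter {X K : Type*} {π : (ℕ → X) → K}
    (hsurj : Function.Surjective π) {F : X → K → K}
    (hrel : ∀ (i : X) (ξ : ℕ → X), F i (π ξ) = π (appendLetter i ξ))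
    (hshift : ∀ ξ η : ℕ → X, π ξ = π η →
      π (fun k => ξ (k + 1)) = π (fun k => η (k + 1)))
    {z : List X} {hz : 0 < z.length} {n m : ℕ} {S : Fin n → Set X} {T : Fin m → Set X}
    {α β : K} (hα : π ⁻¹' {α} = classSet z hz n S) (hβ : π ⁻¹' {β} = classSet z hz m T)
    {N : ℕ} (hNn : N < n) (hNm : N < m)
    (hagree : ∀ k, k < N → S ⟨n - 1 - k, by lia⟩ = T ⟨m - 1 - k, by lia⟩)
    {x : X} (hxS : x ∈ S ⟨n - 1 - N, by lia⟩) (hxT : x ∈ T ⟨m - 1 - N, by lia⟩) :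
    S ⟨n - 1 - N, by lia⟩ ⊆ T ⟨m - 1 - N, by lia⟩ := by
  intro y hyS
  set p := n - 1 - N
  set q := m - 1 - N
  have fiber_α (ξ) : π ξ = α ↔ ξ ∈ classSet z hz n S := Set.ext_iff.1 hα ξ
  have fiber_β (η) : π η = β ↔ η ∈ classSet z hz m T := Set.ext_iff.1 hβ η
  obtain ⟨ξ₀, hξ₀⟩ := hsurj α
  obtain ⟨η₀, hη₀⟩ := hsurj β
  have hξ₀S := (fiber_α ξ₀).1 hξ₀
  have hx : π (Function.update ξ₀ p x) = α := (fiber_α _).2 (update_mem_classSet hξ₀S _ hxS)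
  have hy : π (Function.update ξ₀ p y) = α := (fiber_α _).2 (update_mem_classSet hξ₀S _ hyS)
  have hgraft_x : appendLetters η₀ q (fun k => Function.update ξ₀ p x (k + p))
      ∈ classSet z hz m T := by
    refine appendLetters_mem_classSet ((fiber_β η₀).1 hη₀) (by omega) (fun k => ?_)
      (fun i hi => ?_)
    · rw [Function.update_of_ne (by omega), show m - q + k + p = n + k by omega]
      exact hξ₀S.1 k
    · rcases Nat.eq_zero_or_pos i with rfl | hi0
      · simpa using hxT
      · rw [Function.update_of_ne (by omega)]
        have hT : T ⟨q + i, hi⟩ = T ⟨m - 1 - (N - i), by omega⟩ := by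
          congr 2
          omega
        rw [show i + p = n - 1 - (N - i) by omega, hT, ← hagree (N - i) (by omega)]
        exact hξ₀S.2 _
  have hgraft_y : π (appendLetters η₀ q (fun k => Function.update ξ₀ p y (k + p))) = β := by
    rw [map_appendLetters_eq_of_map_eq hrel η₀ q
      (map_shift_eq_of_map_eq hshift p (hy.trans hx.symm))]
    exact (fiber_β _).2 hgraft_x
  simpa [appendLetters_apply_self] using ((fiber_β _).1 hgraft_y).2 ⟨q, by omega⟩

/-- let `α ≠ β` be points of `π(C)` of a p.c.f. self-similar structure
with shift-descent, with `π⁻¹(α) = \bar z Sₙ…S₁` and `π⁻¹(β) = \bar z Tₘ…T₁` (same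
recurring tail).  If `S_{n-k} = T_{m-k}` for all `0 ≤ k < N`, then either
`S_{n-N} = T_{m-N}` or `S_{n-N} ∩ T_{m-N} = ∅`. -/
theorem class_sets_equal_or_disjoint {X K : Type*}
    (π : (ℕ → X) → K) (hsurj : Function.Surjective π)
    (F : X → K → K)
    (hrel : ∀ (i : X) (ξ : ℕ → X), F i (π ξ) = π (appendLetter i ξ))
    (hshift : ∀ ξ η : ℕ → X, π ξ = π η →
      π (fun k => ξ (k + 1)) = π (fun k => η (k + 1)))
    (z : List X) (hz : 0 < z.length) (n m : ℕ)
    (S : Fin n → Set X) (T : Fin m → Set X)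
    (α β : K)
    (hα : π ⁻¹' {α} = classSet z hz n S)
    (hβ : π ⁻¹' {β} = classSet z hz m T)
    (N : ℕ) (hNn : N < n) (hNm : N < m)
    (hagree : ∀ k, k < N →
      S ⟨n - 1 - k, by omega⟩ = T ⟨m - 1 - k, by omega⟩) :
    S ⟨n - 1 - N, by omega⟩ = T ⟨m - 1 - N, by omega⟩ ∨
    S ⟨n - 1 - N, by omega⟩ ∩ T ⟨m - 1 - N, by omega⟩ = ∅ := by
  rcases (S ⟨n - 1 - N, by omega⟩ ∩ T ⟨m - 1 - N, by omega⟩).eq_empty_or_nonempty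
    with hdisj | ⟨x, hxS, hxT⟩
  · exact Or.inr hdisj
  · exact Or.inl <| Set.Subset.antisymm
      (letterSet_subset_of_mem_inter hsurj hrel hshift hα hβ hNn hNm hagree hxS hxT)
      (letterSet_subset_of_mem_inter hsurj hrel hshift hβ hα hNm hNn
        (fun k hk => (hagree k hk).symm) hxT hxS)
end

section
/- Let g be a bounded automorphism of X* all of whose restrictions form a finite set, and suppose every element of the nucleus of the group it generates changes at most one letter in every word (strictly p.c.f. condition). Then: for every element h of the nucleus and every word w ∈ X* with h(w) ≠ w, the restriction h|_w is the identity. Consequently, in any left-infinite path in the nucleus containing an edge with label (x, y) where x ≠ y, the terminal state of the path is trivial, and Condition 3.4 (quasi-monocarpic) holds vacuously. -/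
/-- The restriction of a state at a finite word. -/
def resWord {N X : Type*} (res : N → X → N) : N → List X → N
  | q, [] => q
  | q, a :: l => resWord res (res q a) l

section Aux
variable {N X : Type*} (act : N → X → X) (res : N → X → N)

theorem actWord_length (q : N) (w : List X) :
    (actWord act res q w).length = w.length := by
  induction w generalizing q with
  | nil => rfl
  | cons a l ih => simp [actWord, ih]

theorem actWord_append (q : N) (u v : List X) :
    actWord act res q (u ++ v)
      = actWord act res q u ++ actWord act res (resWord res q u) v := by
  induction u generalizing q with
  | nil => rfl
  | cons a l ih => simp [actWord, resWord, ih]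

theorem eq_of_zip {l₁ l₂ : List X} (hl : l₁.length = l₂.length)
    (h : ∀ p ∈ l₁.zip l₂, p.1 = p.2) : l₁ = l₂ := by
  induction l₁ generalizing l₂ with
  | nil => cases l₂ <;> simp_all
  | cons a l ih =>
    cases l₂ with
    | nil => simp_all
    | cons b m =>
      simp only [List.zip_cons_cons, List.mem_cons, List.length_cons,
        Nat.add_right_cancel_iff] at h hl
      exact List.cons_eq_cons.mpr
        ⟨h (a, b) (Or.inl rfl), ih hl fun p hp => h p (Or.inr hp)⟩
end Aux

/-- let `(N, act, res)` be the finite nucleus of a self-similar group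
(with trivial state `one`), and assume every element of the nucleus changes at most
one letter in every word (the strictly p.c.f. condition).  Then: for every state `h`
of the nucleus and every word `w` with `h w ≠ w`, the restriction `h|_w` acts as the
identity; consequently in any left-infinite path containing an edge with label
`(x, y)`, `x ≠ y`, the terminal state acts trivially, and Condition 3.4 holds
(vacuously). -/
theorem strictly_pcf_condition {X N : Type*} [Fintype X] [Fintype N] [DecidableEq X]
    (act : N → X → X) (res : N → X → N) (one : N)
    (hone : ∀ x : X, act one x = x ∧ res one x = one)
    (hchange : ∀ (q : N) (w : List X),
      ((w.zip (actWord act res q w)).countP fun p => decide (p.1 ≠ p.2)) ≤ 1) :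
    (∀ (q : N) (w : List X), actWord act res q w ≠ w →
      ∀ v : List X, actWord act res (resWord res q w) v = v) ∧
    (∀ (g : ℕ → N) (x y : ℕ → X), IsPath act res g x y → (∃ n, x n ≠ y n) →
      ∀ v : List X, actWord act res (g 0) v = v) ∧
    (∀ (g : ℕ → N) (x y : ℕ → X), IsPath act res g x y →
      (∃ v : List X, actWord act res (g 0) v ≠ v) →
      ∀ w : List X, ∃ h : ℕ → N, IsPath act res h x y ∧
        actWord act res (h 0) w = w) := by
  -- key elementary fact: zero count on the zip means equality
  have key : ∀ (q : N) (u : List X),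
      ((u.zip (actWord act res q u)).countP fun p => decide (p.1 ≠ p.2)) = 0 →
      actWord act res q u = u := by
    intro q u h0
    have hz := List.countP_eq_zero.mp h0
    exact (eq_of_zip (actWord_length act res q u).symm
      (fun p hp => by simpa using hz p hp)).symm
  have part1 : ∀ (q : N) (w : List X), actWord act res q w ≠ w →
      ∀ v : List X, actWord act res (resWord res q w) v = v := by
    intro q w hw v
    have hsplit := actWord_append act res q w v
    have hc := hchange q (w ++ v)
    rw [hsplit, List.zip_append (by rw [actWord_length]), List.countP_append] at hc
    have hw1 : 1 ≤ (w.zip (actWord act res q w)).countP fun p => decide (p.1 ≠ p.2) := by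
      by_contra hcon
      exact hw (key q w (by omega))
    exact key (resWord res q w) v (by omega)
  have part2 : ∀ (g : ℕ → N) (x y : ℕ → X), IsPath act res g x y → (∃ n, x n ≠ y n) →
      ∀ v : List X, actWord act res (g 0) v = v := by
    have step : ∀ (g : ℕ → N) (x y : ℕ → X), IsPath act res g x y →
        ∀ n, (∀ v : List X, actWord act res (g n) v = v) →
        ∀ m ≤ n, ∀ v : List X, actWord act res (g m) v = v := by
      intro g x y hp n hn m hm
      induction n with
      | zero => simpa [Nat.le_zero.mp hm] using hn
      | succ k ih =>
        rcases Nat.lt_or_ge m (k + 1) with h | h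
        · refine ih ?_ (by omega)
          intro v
          have := hn (x k :: v)
          simp only [actWord, (hp k).2, List.cons.injEq] at this
          exact this.2
        · have : m = k + 1 := by omega
          simpa [this] using hn
    intro g x y hp ⟨n, hn⟩ v
    have hne : actWord act res (g (n + 1)) [x n] ≠ [x n] := by
      simp only [actWord, ne_eq, List.cons.injEq, and_true]
      rw [(hp n).1]; exact fun h => hn h.symm
    have htriv : ∀ v : List X, actWord act res (g n) v = v := by
      have := part1 (g (n + 1)) [x n] hne
      simpa [resWord, (hp n).2] using this
    exact step g x y hp n htriv 0 (Nat.zero_le _) v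
  refine ⟨part1, part2, ?_⟩
  · intro g x y hp hv w
    have hxy : ∀ n, x n = y n := by
      intro n
      by_contra hne
      obtain ⟨v, hv⟩ := hv
      exact hv (part2 g x y hp ⟨n, hne⟩ v)
    refine ⟨fun _ => one, fun n => ⟨by rw [(hone (x n)).1, hxy n], (hone (x n)).2⟩, ?_⟩
    induction w with
    | nil => rfl
    | cons a l ih => simp [actWord, (hone a).1, (hone a).2, ih]
end
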